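/- Let p ≥ 1 be an integer, let e_p be a primitive p-th root of unity in ℂ, let t ≥ 1 be an integer and let m be a natural number with 0 ≤ m ≤ p−1. Then for every x ∈ ℂ: (1 − x^{2p}) · Σ_{p+m = k_t ≥ k_{t−1} ≥ … ≥ k_1 ≥ 0} ∏_{i=1}^{t−1} e_p^{k_i(k_i+1)} x^{2k_i} [k_{i+1} choose k_i]_{e_p} = (1 − x^{2tp}) · Σ_{m = k_t ≥ k_{t−1} ≥ … ≥ k_1 ≥ 0} ∏_{i=1}^{t−1} e_p^{k_i(k_i+1)} x^{2k_i} [k_{i+1} choose k_i]_{e_p}, where both sums are over integer sequences with the indicated fixed top entry k_t. -/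

import Mathlib

/-- Evaluation at `ζ : ℂ` of the Gaussian binomial coefficient `[n choose k]_q ∈ ℤ[q]`,
defined by the `q`-Pascal recursion, agreeing with
`∏_{i=1}^{k} (1−q^{n−k+i})/(1−q^i)` for `k ≤ n` and with `0` for `k > n`. -/
def qbinom : ℕ → ℕ → ℂ → ℂ
  | _, 0, _ => 1
  | 0, _ + 1, _ => 0
  | n + 1, k + 1, ζ => qbinom n k ζ + ζ ^ (k + 1) * qbinom n (k + 1) ζ

/-- The weighted chain sum: the sum over integer sequences
`top = k_{t+1} ≥ k_t ≥ … ≥ k_1 ≥ 0` of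
`∏_{i=1}^{t} e^{k_i(k_i+1)} x^{2k_i} [k_{i+1} choose k_i]_e`,
where a chain is encoded as a monotone function `f : Fin (t+1) → Fin (top+1)`
with top value `top` (so `f i = k_{i+1}`). -/
noncomputable def chainW (t top : ℕ) (x e : ℂ) : ℂ :=
  ∑ f ∈ Finset.univ.filter
      (fun f : Fin (t + 1) → Fin (top + 1) => Monotone f ∧ f (Fin.last t) = Fin.last top),
    ∏ i : Fin t,
      e ^ ((f i.castSucc : ℕ) * ((f i.castSucc : ℕ) + 1)) * x ^ (2 * (f i.castSucc : ℕ)) *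
        qbinom (f i.succ : ℕ) (f i.castSucc : ℕ) e

/-!
Write `W_s(n)` for the chain sum with top value `n`. Splitting off the penultimate entry `k` of a
chain gives `W_{s+1}(n) = ∑_{k ≤ n} e^{k(k+1)} x^{2k} [n choose k]_e W_s(k)`. At a primitive
`p`-th root of unity the `q`-Lucas theorem gives, for `m < p`,
`[p+m choose k]_e = [m choose k]_e` for `k < p` and `[p+m choose p+j]_e = [m choose j]_e`; as
`e^p = 1`, the weight of `k = p + j` is `x^{2p}` times the weight of `j`. Hence
`W_{s+1}(p+m) = W_{s+1}(m) + x^{2p} ∑_j e^{j(j+1)} x^{2j} [m choose j]_e W_s(p+j)`,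
and the identity follows by induction on `s`.
-/

open Finset

theorem qbinom_zero_right (n : ℕ) (ζ : ℂ) : qbinom n 0 ζ = 1 := by
  cases n <;> rfl

theorem qbinom_succ_succ (n k : ℕ) (ζ : ℂ) :
    qbinom (n + 1) (k + 1) ζ = qbinom n k ζ + ζ ^ (k + 1) * qbinom n (k + 1) ζ :=
  rfl

theorem qbinom_eq_zero_of_lt {n k : ℕ} (h : n < k) (ζ : ℂ) : qbinom n k ζ = 0 := by
  induction n generalizing k with
  | zero => obtain ⟨k, rfl⟩ := Nat.exists_eq_add_of_lt h; rfl
  | succ n ih =>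
    obtain ⟨k, rfl⟩ := Nat.exists_eq_add_of_lt (Nat.zero_lt_of_lt h)
    rw [qbinom_succ_succ, ih (by omega), ih (by omega), mul_zero, add_zero]

theorem qbinom_self (n : ℕ) (ζ : ℂ) : qbinom n n ζ = 1 := by
  induction n with
  | zero => rfl
  | succ n ih => rw [qbinom_succ_succ, ih, qbinom_eq_zero_of_lt n.lt_succ_self, mul_zero, add_zero]

theorem prod_one_sub_pow_mul_qbinom (ζ : ℂ) : ∀ n k : ℕ,
    (∏ i ∈ range k, (1 - ζ ^ (i + 1))) * qbinom (n + k) k ζ =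
      ∏ i ∈ range k, (1 - ζ ^ (n + i + 1))
  | 0, k => by simp [qbinom_self]
  | n + 1, 0 => by simp [qbinom_zero_right]
  | n + 1, k + 1 => by
    have h₁ := prod_one_sub_pow_mul_qbinom ζ (n + 1) k
    have h₂ := prod_one_sub_pow_mul_qbinom ζ n (k + 1)
    rw [prod_range_succ (fun i => 1 - ζ ^ (i + 1)),
      prod_range_succ' (fun i => 1 - ζ ^ (n + i + 1)), show n + (k + 1) = n + 1 + k by ring]
      at h₂
    rw [show n + 1 + (k + 1) = n + 1 + k + 1 by ring, qbinom_succ_succ, prod_range_succ,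
      prod_range_succ]
    simp only [show ∀ i, n + (i + 1) + 1 = n + 1 + i + 1 by omega] at h₂
    linear_combination (1 - ζ ^ (k + 1)) * h₁ + ζ ^ (k + 1) * h₂

theorem IsPrimitiveRoot.qbinom_eq_zero {p k : ℕ} {e : ℂ} (he : IsPrimitiveRoot e p)
    (hk₀ : 0 < k) (hkp : k < p) : qbinom p k e = 0 := by
  obtain ⟨n, rfl⟩ : ∃ n, p = n + k := ⟨p - k, by omega⟩
  have hD : ∏ i ∈ range k, (1 - e ^ (i + 1)) ≠ 0 :=
    prod_ne_zero_iff.mpr fun i hi =>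
      sub_ne_zero.mpr (he.pow_ne_one_of_pos_of_lt i.succ_ne_zero (by simp at hi; omega)).symm
  have hN : ∏ i ∈ range k, (1 - e ^ (n + i + 1)) = 0 :=
    prod_eq_zero (i := k - 1) (by simp; omega) (by rw [show n + (k - 1) + 1 = n + k by omega,
      he.pow_eq_one, sub_self])
  simpa [hD, hN] using prod_one_sub_pow_mul_qbinom e n k

theorem IsPrimitiveRoot.qbinom_add {p m : ℕ} {e : ℂ} (he : IsPrimitiveRoot e p) (hm : m < p) :
    (∀ k < p, qbinom (p + m) k e = qbinom m k e) ∧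
      ∀ j, qbinom (p + m) (p + j) e = qbinom m j e := by
  induction m with
  | zero =>
    refine ⟨fun k hk => ?_, fun j => ?_⟩
    · rcases k.eq_zero_or_pos with rfl | hk₀
      · simp only [qbinom_zero_right]
      · rw [add_zero, he.qbinom_eq_zero hk₀ hk, qbinom_eq_zero_of_lt hk₀]
    · rcases j.eq_zero_or_pos with rfl | hj₀
      · simp only [add_zero, qbinom_self]
      · rw [qbinom_eq_zero_of_lt (by omega), qbinom_eq_zero_of_lt hj₀]
  | succ m ih =>
    obtain ⟨ih₁, ih₂⟩ := ih (by omega)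
    refine ⟨fun k hk => ?_, fun j => ?_⟩
    · cases k with
      | zero => simp only [qbinom_zero_right]
      | succ k => rw [← add_assoc, qbinom_succ_succ, ih₁ k (by omega), ih₁ (k + 1) hk,
          qbinom_succ_succ]
    · cases j with
      | zero =>
        obtain ⟨r, hr⟩ : ∃ r, p = r + 1 := ⟨p - 1, by omega⟩
        have hpp : qbinom (p + m) p e = 1 := by simpa [qbinom_zero_right] using ih₂ 0
        rw [add_zero, hr, ← add_assoc, qbinom_succ_succ, ← hr, ih₁ r (by omega), hpp,
          he.pow_eq_one, qbinom_eq_zero_of_lt (by omega), qbinom_zero_right, zero_add, one_mul]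
      | succ j =>
        rw [← add_assoc, ← add_assoc, qbinom_succ_succ, ih₂ j, add_assoc p j, ih₂ (j + 1),
          pow_add, he.pow_eq_one, one_mul, qbinom_succ_succ]

def chains (n top : ℕ) : Finset (Fin (n + 1) → Fin (top + 1)) :=
  {f | Monotone f ∧ f (Fin.last n) = Fin.last top}

theorem mem_chains {n top : ℕ} {f : Fin (n + 1) → Fin (top + 1)} :
    f ∈ chains n top ↔ Monotone f ∧ f (Fin.last n) = Fin.last top := by
  simp [chains]

theorem chains_zero (top : ℕ) : chains 0 top = {fun _ => Fin.last top} := by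
  ext f
  rw [mem_chains, mem_singleton, funext_iff, Fin.forall_fin_one]
  exact ⟨And.right, fun h =>
    ⟨fun a b _ => by rw [Fin.fin_one_eq_zero a, Fin.fin_one_eq_zero b], h⟩⟩

/-- The `min` only makes the map total: on a chain whose penultimate value is `k` it just drops
the top value (`coe_chainTruncate`). -/
def chainTruncate {n top : ℕ} (k : ℕ) (f : Fin (n + 2) → Fin (top + 1)) :
    Fin (n + 1) → Fin (k + 1) :=
  fun i => ⟨min (f i.castSucc) k, Nat.lt_succ_of_le (min_le_right _ _)⟩

theorem coe_chainTruncate {n top : ℕ} {f : Fin (n + 2) → Fin (top + 1)} (hf : Monotone f)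
    (i : Fin (n + 1)) : (chainTruncate (f (Fin.last n).castSucc) f i : ℕ) = f i.castSucc :=
  min_eq_left (hf (Fin.castSucc_le_castSucc_iff.mpr i.le_last))

def chainSnoc {n k : ℕ} (top : ℕ) (hk : k ≤ top) (g : Fin (n + 1) → Fin (k + 1)) :
    Fin (n + 2) → Fin (top + 1) :=
  Fin.snoc (fun i => Fin.castLE (Nat.succ_le_succ hk) (g i)) (Fin.last top)

theorem sum_prod_chains_succ {R : Type*} [CommSemiring R] (w : ℕ → ℕ → R) (n top : ℕ) :
    ∑ f ∈ chains (n + 1) top, ∏ i : Fin (n + 1), w (f i.succ) (f i.castSucc) =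
      ∑ k ∈ range (top + 1),
        w top k * ∑ g ∈ chains n k, ∏ i : Fin n, w (g i.succ) (g i.castSucc) := by
  rw [← sum_fiberwise_of_maps_to (g := fun f => (f (Fin.last n).castSucc : ℕ))
    (t := range (top + 1)) (fun f _ => mem_range.mpr (f _).isLt)]
  refine sum_congr rfl fun k hk => ?_
  have hk : k ≤ top := Nat.lt_succ_iff.mp (mem_range.mp hk)
  rw [mul_sum]
  refine sum_nbij' (chainTruncate k) (chainSnoc top hk) ?_ ?_ ?_ ?_ ?_
  · intro f hf
    rw [mem_filter, mem_chains] at hf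
    obtain ⟨⟨hmono, -⟩, rfl⟩ := hf
    refine mem_chains.mpr ⟨fun a b hab => ?_, Fin.ext (coe_chainTruncate hmono _)⟩
    exact min_le_min_right _ (hmono (Fin.castSucc_le_castSucc_iff.mpr hab))
  · intro g hg
    obtain ⟨hmono, hlast⟩ := mem_chains.mp hg
    refine mem_filter.mpr ⟨mem_chains.mpr ⟨?_, Fin.snoc_last ..⟩, ?_⟩
    · rw [chainSnoc, ← Fin.insertNth_last']
      exact Fin.insertNth_last_monotone (f := fun i => Fin.castLE (Nat.succ_le_succ hk) (g i))
        (fun a b hab => hmono hab) (Fin.last top) (Fin.le_last _)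
    · simp [chainSnoc, hlast]
  · intro f hf
    rw [mem_filter, mem_chains] at hf
    obtain ⟨⟨hmono, hlast⟩, rfl⟩ := hf
    funext i
    refine Fin.lastCases ?_ (fun j => ?_) i
    · simp [chainSnoc, hlast]
    · exact Fin.ext (by simp [chainSnoc, coe_chainTruncate hmono])
  · intro g _
    funext i
    exact Fin.ext (by simp [chainSnoc, chainTruncate, Nat.le_of_lt_succ (g i).isLt])
  · intro f hf
    rw [mem_filter, mem_chains] at hf
    obtain ⟨⟨hmono, hlast⟩, rfl⟩ := hf
    rw [Fin.prod_univ_castSucc, mul_comm, Fin.succ_last, hlast]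
    simp only [Fin.val_last, coe_chainTruncate hmono, Fin.succ_castSucc]

def chainWeight (x e : ℂ) (a b : ℕ) : ℂ :=
  e ^ (b * (b + 1)) * x ^ (2 * b) * qbinom a b e

theorem chainW_eq_sum_chains (t top : ℕ) (x e : ℂ) :
    chainW t top x e =
      ∑ f ∈ chains t top, ∏ i : Fin t, chainWeight x e (f i.succ) (f i.castSucc) :=
  rfl

theorem chainW_zero (top : ℕ) (x e : ℂ) : chainW 0 top x e = 1 := by
  simp [chainW_eq_sum_chains, chains_zero]

theorem chainW_succ (n top : ℕ) (x e : ℂ) :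
    chainW (n + 1) top x e =
      ∑ k ∈ range (top + 1), chainWeight x e top k * chainW n k x e :=
  sum_prod_chains_succ (chainWeight x e) n top

theorem chainWeight_eq_zero_of_lt {a b : ℕ} (h : a < b) (x e : ℂ) :
    chainWeight x e a b = 0 := by
  rw [chainWeight, qbinom_eq_zero_of_lt h, mul_zero]

theorem IsPrimitiveRoot.chainWeight_add_of_lt {p m k : ℕ} {e : ℂ} (he : IsPrimitiveRoot e p)
    (hm : m < p) (hk : k < p) (x : ℂ) :
    chainWeight x e (p + m) k = chainWeight x e m k := by
  rw [chainWeight, chainWeight, (he.qbinom_add hm).1 k hk]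

theorem IsPrimitiveRoot.chainWeight_add_add {p m : ℕ} {e : ℂ} (he : IsPrimitiveRoot e p)
    (hm : m < p) (x : ℂ) (j : ℕ) :
    chainWeight x e (p + m) (p + j) = x ^ (2 * p) * chainWeight x e m j := by
  have hp : e ^ (p * (p + 2 * j + 1)) = 1 := by rw [pow_mul, he.pow_eq_one, one_pow]
  rw [chainWeight, chainWeight, (he.qbinom_add hm).2 j,
    show (p + j) * (p + j + 1) = p * (p + 2 * j + 1) + j * (j + 1) by ring, pow_add, hp]
  ring

theorem IsPrimitiveRoot.chainW_succ_add {p m : ℕ} {e : ℂ} (he : IsPrimitiveRoot e p)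
    (hm : m < p) (x : ℂ) (s : ℕ) :
    chainW (s + 1) (p + m) x e =
      chainW (s + 1) m x e +
        x ^ (2 * p) * ∑ j ∈ range (m + 1), chainWeight x e m j * chainW s (p + j) x e := by
  rw [chainW_succ, chainW_succ, add_assoc, sum_range_add, mul_sum]
  congr 1
  · rw [sum_congr rfl fun k hk => by rw [he.chainWeight_add_of_lt hm (mem_range.mp hk)]]
    refine (sum_subset (range_subset_range.mpr hm) fun k _ hk => ?_).symm
    rw [chainWeight_eq_zero_of_lt (by simpa using hk), zero_mul]
  · refine sum_congr rfl fun j _ => ?_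
    rw [he.chainWeight_add_add hm, mul_assoc]

theorem IsPrimitiveRoot.one_sub_pow_mul_chainW_add {p : ℕ} {e : ℂ} (he : IsPrimitiveRoot e p)
    (x : ℂ) (s : ℕ) {m : ℕ} (hm : m < p) :
    (1 - x ^ (2 * p)) * chainW s (p + m) x e = (1 - x ^ (2 * (s + 1) * p)) * chainW s m x e := by
  induction s generalizing m with
  | zero => rw [chainW_zero, chainW_zero, zero_add, mul_one]
  | succ s ih =>
    have hsum : (1 - x ^ (2 * p)) *
        ∑ j ∈ range (m + 1), chainWeight x e m j * chainW s (p + j) x e =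
        (1 - x ^ (2 * (s + 1) * p)) * chainW (s + 1) m x e := by
      rw [chainW_succ, mul_sum, mul_sum]
      refine sum_congr rfl fun j hj => ?_
      linear_combination chainWeight x e m j * ih (m := j) (by simp at hj; omega)
    rw [he.chainW_succ_add hm]
    linear_combination x ^ (2 * p) * hsum

theorem stmt8 (p : ℕ) (hp : 1 ≤ p) (e : ℂ) (he : IsPrimitiveRoot e p)
    (t : ℕ) (ht : 1 ≤ t) (m : ℕ) (hm : m ≤ p - 1) (x : ℂ) :
    (1 - x ^ (2 * p)) * chainW (t - 1) (p + m) x e =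
      (1 - x ^ (2 * t * p)) * chainW (t - 1) m x e := by
  obtain ⟨s, rfl⟩ : ∃ s, t = s + 1 := ⟨t - 1, by omega⟩
  rw [Nat.add_sub_cancel]
  exact he.one_sub_pow_mul_chainW_add x s (by omega)
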